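/- arXiv:1512.04277 — 4 statements merged into one kernel-verified Lean document; each statement's English description precedes it below -/
import Mathlib

section
/- Let L = 1 and H = 4/√3. Consider scheduling on related machines with n = 3 agents and jobs of sizes 10, 6, 6, with feasible allocation set 𝒜. For every λ ∈ [0,1], every f ∈ ℝ³, and every algorithm A : {L,H}³ → 𝒜, if the λ-linear mechanism (A,p) with p_i(θ) = (λL + (1−λ)H)·A_i(θ) + f_i is bribeproof, then there exists θ ∈ {L,H}³ such that max_i A_i(θ)·θ_i ≥ (2/√3) · min_{a∈𝒜} max_i a_i·θ_i. In particular, no bribeproof λ-linear mechanism for this problem approximates the minimum makespan within a factor smaller than 2/√3. -/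
open Function Finset

noncomputable section

/-- Utility of agent `i` with true per-unit cost `t` when the reported vector is `θhat`. -/
def utility {n : ℕ} (A p : (Fin n → ℝ) → Fin n → ℝ) (θhat : Fin n → ℝ) (i : Fin n) (t : ℝ) : ℝ :=
  p θhat i - A θhat i * t

/-- `θ` belongs to the product domain `Θ = Θ_1 × ⋯ × Θ_n`. -/
def InDomain {n : ℕ} (Θ : Fin n → Set ℝ) (θ : Fin n → ℝ) : Prop := ∀ k, θ k ∈ Θ k

/-- Bribeproofness: no agent `j` can bribe an agent `i` into a unilateral misreport
so that their joint utility improves (taking `i = j` gives strategyproofness). -/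
def Bribeproof {n : ℕ} (Θ : Fin n → Set ℝ) (A p : (Fin n → ℝ) → Fin n → ℝ) : Prop :=
  ∀ θ, InDomain Θ θ → ∀ i j : Fin n, ∀ x ∈ Θ i,
    utility A p θ i (θ i) + utility A p θ j (θ j) ≥
      utility A p (Function.update θ i x) i (θ i) +
        utility A p (Function.update θ i x) j (θ j)

/-- Strong bribeproofness: additionally no two distinct agents can jointly misreport
so that their joint utility improves. -/
def StronglyBribeproof {n : ℕ} (Θ : Fin n → Set ℝ) (A p : (Fin n → ℝ) → Fin n → ℝ) : Prop :=
  Bribeproof Θ A p ∧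
    ∀ θ, InDomain Θ θ → ∀ i j : Fin n, i ≠ j → ∀ x ∈ Θ i, ∀ y ∈ Θ j,
      utility A p θ i (θ i) + utility A p θ j (θ j) ≥
        utility A p (Function.update (Function.update θ i x) j y) i (θ i) +
          utility A p (Function.update (Function.update θ i x) j y) j (θ j)

/-- Collusion-proofness: no coalition `C` can improve its total utility by a joint
misreport of the types of (some of) its members. -/
def CollusionProof {n : ℕ} (Θ : Fin n → Set ℝ) (A p : (Fin n → ℝ) → Fin n → ℝ) : Prop :=
  ∀ θ, InDomain Θ θ → ∀ C : Finset (Fin n), ∀ θhat, InDomain Θ θhat →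
    (∀ k, k ∉ C → θhat k = θ k) →
    ∑ i ∈ C, utility A p θ i (θ i) ≥ ∑ i ∈ C, utility A p θhat i (θ i)

/-- `Δ^i_k(θ_{-i}) = A_k(L, θ_{-i}) - A_k(H, θ_{-i})`. -/
def Delta {n : ℕ} (A : (Fin n → ℝ) → Fin n → ℝ) (L H : ℝ) (θ : Fin n → ℝ) (i k : Fin n) : ℝ :=
  A (Function.update θ i L) k - A (Function.update θ i H) k

/-- Feasible allocations for scheduling jobs of sizes 10, 6, 6 on three related machines. -/
def Sched : Set (Fin 3 → ℝ) :=
  {a | ∃ g : Fin 3 → Fin 3, ∀ i,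
    a i = ∑ j ∈ Finset.univ.filter (fun j => g j = i), (![10, 6, 6] : Fin 3 → ℝ) j}

/-- Makespan of allocation `a` at types `θ`. -/
def makespan (a θ : Fin 3 → ℝ) : ℝ :=
  max (a 0 * θ 0) (max (a 1 * θ 1) (a 2 * θ 2))

lemma fin3 (v : Fin 3) : v = 0 ∨ v = 1 ∨ v = 2 := by omega

lemma mat2 {α : Type*} (x y z : α) : ![x,y,z] 2 = z := rfl

lemma load_formula (g : Fin 3 → Fin 3) (i : Fin 3) :
    ∑ j ∈ Finset.univ.filter (fun j => g j = i), (![10,6,6] : Fin 3 → ℝ) j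
      = (if g 0 = i then (10:ℝ) else 0) + (if g 1 = i then 6 else 0) + (if g 2 = i then 6 else 0) := by
  rw [Finset.sum_filter, Fin.sum_univ_three]
  norm_num [mat2]

lemma struct2 {a : Fin 3 → ℝ} (ha : a ∈ Sched) {H : ℝ} (hH2 : 2 < H) (hH83 : H < 8/3)
    (hm : makespan a ![H,H,1] < 16) : a 0 = 6 ∧ a 1 = 6 ∧ a 2 = 10 := by
  obtain ⟨g, hg⟩ := ha
  have e0 := hg 0; have e1 := hg 1; have e2 := hg 2
  rw [load_formula] at e0 e1 e2
  simp only [makespan, Matrix.cons_val_zero, Matrix.cons_val_one, Matrix.head_cons] at hm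
  have hm' : a 0 * H < 16 ∧ a 1 * H < 16 ∧ a 2 * (![H,H,1] 2) < 16 := by
    rw [max_lt_iff, max_lt_iff] at hm; exact hm
  obtain ⟨hm0, hm1, hm2⟩ := hm'
  norm_num [mat2] at hm2
  rcases fin3 (g 0) with h0|h0|h0 <;> rcases fin3 (g 1) with h1|h1|h1 <;>
    rcases fin3 (g 2) with h2|h2|h2 <;>
    rw [h0, h1, h2] at e0 e1 e2 <;>
    simp only [Fin.reduceEq, reduceIte, add_zero, zero_add] at e0 e1 e2 <;>
    first
      | exact ⟨by linarith, by linarith, by linarith⟩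
      | (rw [e0] at hm0; rw [e1] at hm1; rw [e2] at hm2; linarith)

lemma struct3 {a : Fin 3 → ℝ} (ha : a ∈ Sched) {H : ℝ} (hH2 : 2 < H) (hH83 : H < 8/3)
    (hm : makespan a ![H,1,H] < 16) : a 0 = 6 ∧ a 1 = 10 ∧ a 2 = 6 := by
  obtain ⟨g, hg⟩ := ha
  have e0 := hg 0; have e1 := hg 1; have e2 := hg 2
  rw [load_formula] at e0 e1 e2
  simp only [makespan, Matrix.cons_val_zero, Matrix.cons_val_one, Matrix.head_cons] at hm
  have hm' : a 0 * H < 16 ∧ a 1 * 1 < 16 ∧ a 2 * (![H,1,H] 2) < 16 := by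
    rw [max_lt_iff, max_lt_iff] at hm; exact hm
  obtain ⟨hm0, hm1, hm2⟩ := hm'
  norm_num [mat2] at hm1 hm2
  rcases fin3 (g 0) with h0|h0|h0 <;> rcases fin3 (g 1) with h1|h1|h1 <;>
    rcases fin3 (g 2) with h2|h2|h2 <;>
    rw [h0, h1, h2] at e0 e1 e2 <;>
    simp only [Fin.reduceEq, reduceIte, add_zero, zero_add] at e0 e1 e2 <;>
    first
      | exact ⟨by linarith, by linarith, by linarith⟩
      | (rw [e0] at hm0; rw [e1] at hm1; rw [e2] at hm2; linarith)

lemma struct1 {a : Fin 3 → ℝ} (ha : a ∈ Sched) {H : ℝ} (hH2 : 2 < H) (hH83 : H < 8/3)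
    (hm : makespan a ![H,1,1] < 6*H) :
    (a 0 = 0 ∧ a 1 = 12 ∧ a 2 = 10) ∨ (a 0 = 0 ∧ a 1 = 10 ∧ a 2 = 12) := by
  obtain ⟨g, hg⟩ := ha
  have e0 := hg 0; have e1 := hg 1; have e2 := hg 2
  rw [load_formula] at e0 e1 e2
  simp only [makespan, Matrix.cons_val_zero, Matrix.cons_val_one, Matrix.head_cons] at hm
  have hm' : a 0 * H < 6*H ∧ a 1 * 1 < 6*H ∧ a 2 * (![H,1,1] 2) < 6*H := by
    rw [max_lt_iff, max_lt_iff] at hm; exact hm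
  obtain ⟨hm0, hm1, hm2⟩ := hm'
  norm_num [mat2] at hm1 hm2
  rcases fin3 (g 0) with h0|h0|h0 <;> rcases fin3 (g 1) with h1|h1|h1 <;>
    rcases fin3 (g 2) with h2|h2|h2 <;>
    rw [h0, h1, h2] at e0 e1 e2 <;>
    simp only [Fin.reduceEq, reduceIte, add_zero, zero_add] at e0 e1 e2 <;>
    first
      | exact Or.inl ⟨by linarith, by linarith, by linarith⟩
      | exact Or.inr ⟨by linarith, by linarith, by linarith⟩
      | (rw [e0] at hm0; rw [e1] at hm1; rw [e2] at hm2; linarith)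

lemma sched_nonneg {a : Fin 3 → ℝ} (ha : a ∈ Sched) (i : Fin 3) : 0 ≤ a i := by
  obtain ⟨g, hg⟩ := ha
  rw [hg i, load_formula]
  split_ifs <;> norm_num

theorem stmt_16 (lam : ℝ) (hl0 : 0 ≤ lam) (hl1 : lam ≤ 1) (f : Fin 3 → ℝ)
    (A : (Fin 3 → ℝ) → Fin 3 → ℝ)
    (hfeas : ∀ θ, InDomain (fun _ => ({1, 4 / Real.sqrt 3} : Set ℝ)) θ → A θ ∈ Sched)
    (hbp : Bribeproof (fun _ => ({1, 4 / Real.sqrt 3} : Set ℝ)) A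
      (fun θ i => (lam * 1 + (1 - lam) * (4 / Real.sqrt 3)) * A θ i + f i)) :
    ∃ θ, InDomain (fun _ => ({1, 4 / Real.sqrt 3} : Set ℝ)) θ ∧
      makespan (A θ) θ ≥
        (2 / Real.sqrt 3) * sInf {m : ℝ | ∃ a ∈ Sched, m = makespan a θ} := by
  by_contra hcon
  push_neg at hcon
  have h3 : Real.sqrt 3 * Real.sqrt 3 = 3 := Real.mul_self_sqrt (by norm_num)
  have hs0 : (0:ℝ) < Real.sqrt 3 := by positivity
  set H : ℝ := 4 / Real.sqrt 3 with hHdef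
  have hH2 : 2 < H := by rw [hHdef, lt_div_iff₀ hs0]; nlinarith
  have hH83 : H < 8/3 := by rw [hHdef, div_lt_iff₀ hs0]; nlinarith
  -- domain memberships
  have dom1 : InDomain (fun _ => ({1, H} : Set ℝ)) ![H,1,1] := by
    intro k; fin_cases k <;> simp
  have dom2 : InDomain (fun _ => ({1, H} : Set ℝ)) ![H,H,1] := by
    intro k; fin_cases k <;> simp
  have dom3 : InDomain (fun _ => ({1, H} : Set ℝ)) ![H,1,H] := by
    intro k; fin_cases k <;> simp
  -- the key consequence of hcon
  have key : ∀ θ astar : Fin 3 → ℝ, (∀ k, 0 ≤ θ k) → astar ∈ Sched →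
      InDomain (fun _ => ({1, H} : Set ℝ)) θ →
      makespan (A θ) θ < 2 / Real.sqrt 3 * makespan astar θ := by
    intro θ astar hθ ha hdom
    refine lt_of_lt_of_le (hcon θ hdom) (mul_le_mul_of_nonneg_left ?_ (by positivity))
    refine csInf_le ⟨0, ?_⟩ ⟨astar, ha, rfl⟩
    rintro m ⟨a, haS, rfl⟩
    have h0 : 0 ≤ a 0 * θ 0 := mul_nonneg (sched_nonneg haS 0) (hθ 0)
    exact le_trans h0 (le_max_left _ _)
  have hθnn1 : ∀ k, (0:ℝ) ≤ ![H,1,1] k := by intro k; fin_cases k <;> norm_num <;> linarith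
  have hθnn2 : ∀ k, (0:ℝ) ≤ ![H,H,1] k := by intro k; fin_cases k <;> norm_num <;> linarith
  have hθnn3 : ∀ k, (0:ℝ) ≤ ![H,1,H] k := by intro k; fin_cases k <;> norm_num <;> linarith
  -- candidate optimal allocations
  have m1 : (![0,12,10] : Fin 3 → ℝ) ∈ Sched := by
    refine ⟨![2,1,1], ?_⟩
    intro i; rw [load_formula]
    rcases fin3 i with h|h|h <;> subst h <;>
      simp only [Matrix.cons_val_zero, Matrix.cons_val_one, Matrix.head_cons, mat2,
        Fin.reduceEq, reduceIte] <;> norm_num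
  have m2 : (![6,6,10] : Fin 3 → ℝ) ∈ Sched := by
    refine ⟨![2,0,1], ?_⟩
    intro i; rw [load_formula]
    rcases fin3 i with h|h|h <;> subst h <;>
      simp only [Matrix.cons_val_zero, Matrix.cons_val_one, Matrix.head_cons, mat2,
        Fin.reduceEq, reduceIte] <;> norm_num
  have m3 : (![6,10,6] : Fin 3 → ℝ) ∈ Sched := by
    refine ⟨![1,0,2], ?_⟩
    intro i; rw [load_formula]
    rcases fin3 i with h|h|h <;> subst h <;>
      simp only [Matrix.cons_val_zero, Matrix.cons_val_one, Matrix.head_cons, mat2,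
        Fin.reduceEq, reduceIte] <;> norm_num
  -- makespans of the candidates
  have v1 : makespan ![0,12,10] ![H,1,1] = 12 := by
    unfold makespan
    norm_num [mat2]
  have v2 : makespan ![6,6,10] ![H,H,1] = 6*H := by
    unfold makespan
    norm_num [mat2]
    linarith
  have v3 : makespan ![6,10,6] ![H,1,H] = 6*H := by
    unfold makespan
    norm_num [mat2]
    linarith
  have e16 : 2 / Real.sqrt 3 * (6*H) = 16 := by
    rw [hHdef]; field_simp; nlinarith [h3]
  have e12 : 2 / Real.sqrt 3 * 12 = 6*H := by rw [hHdef]; ring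
  -- small makespans at the three profiles
  have k1 : makespan (A ![H,1,1]) ![H,1,1] < 6*H := by
    have := key ![H,1,1] ![0,12,10] hθnn1 m1 dom1
    rwa [v1, e12] at this
  have k2 : makespan (A ![H,H,1]) ![H,H,1] < 16 := by
    have := key ![H,H,1] ![6,6,10] hθnn2 m2 dom2
    rwa [v2, e16] at this
  have k3 : makespan (A ![H,1,H]) ![H,1,H] < 16 := by
    have := key ![H,1,H] ![6,10,6] hθnn3 m3 dom3
    rwa [v3, e16] at this
  obtain ⟨q0, q1, q2⟩ := struct2 (hfeas _ dom2) hH2 hH83 k2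
  obtain ⟨r0, r1, r2⟩ := struct3 (hfeas _ dom3) hH2 hH83 k3
  -- update equalities
  have u2 : Function.update ![H,H,(1:ℝ)] 1 (1:ℝ) = ![H,1,1] := by
    funext i; fin_cases i <;> simp [Function.update]
  have u3 : Function.update ![H,(1:ℝ),H] 2 (1:ℝ) = ![H,1,1] := by
    funext i; fin_cases i <;> simp [Function.update]
  have hmem1 : (1:ℝ) ∈ ({1, H} : Set ℝ) := by simp
  -- bribeproofness instances
  have B1 := hbp ![H,H,1] dom2 1 0 1 hmem1
  have B2 := hbp ![H,H,1] dom2 1 2 1 hmem1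
  have B3 := hbp ![H,1,H] dom3 2 0 1 hmem1
  have B4 := hbp ![H,1,H] dom3 2 1 1 hmem1
  rw [u2] at B1 B2
  rw [u3] at B3 B4
  simp only [utility, Matrix.cons_val_zero, Matrix.cons_val_one, Matrix.head_cons, mat2] at B1 B2 B3 B4
  simp only [q0, q1, q2] at B1 B2
  simp only [r0, r1, r2] at B3 B4
  rcases struct1 (hfeas _ dom1) hH2 hH83 k1 with ⟨p0, p1, p2⟩ | ⟨p0, p1, p2⟩
  · simp only [p0, p1, p2] at B3 B4
    linarith [B3, B4, hH2]
  · simp only [p0, p1, p2] at B1 B2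
    linarith [B1, B2, hH2]
end
end

section
/- Fix reals L < H and let A : {L,H}^n → ℝ^n be an algorithm with A_i(θ) ≥ 0 for all i and θ that satisfies: (Pareto efficiency) for every θ and i, if A_i(θ) > 0 then θ_i = L or θ = (H,…,H); and (minimality) for every coalition C ⊆ {1,…,n} and every θ̂ ∈ {L,H}^n with θ̂_k = H for all k ∉ C: Σ_{i∈C} A_i(H,…,H) ≤ Σ_{i∈C} A_i(θ̂). Then for every f ∈ ℝ^n, the 1-linear mechanism (A,p) with p_i(θ) = L·A_i(θ) + f_i is collusion-proof. -/
open Function Finset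

noncomputable section

theorem stmt_17 {n : ℕ} (hn : 2 ≤ n) (L H : ℝ) (hLH : L < H)
    (A : (Fin n → ℝ) → Fin n → ℝ)
    (hnonneg : ∀ θ, InDomain (fun _ => ({L, H} : Set ℝ)) θ → ∀ i, 0 ≤ A θ i)
    (hpareto : ∀ θ, InDomain (fun _ => ({L, H} : Set ℝ)) θ → ∀ i,
      0 < A θ i → θ i = L ∨ θ = fun _ => H)
    (hmin : ∀ C : Finset (Fin n), ∀ θhat,
      InDomain (fun _ => ({L, H} : Set ℝ)) θhat →
      (∀ k, k ∉ C → θhat k = H) →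
      ∑ i ∈ C, A (fun _ => H) i ≤ ∑ i ∈ C, A θhat i)
    (f : Fin n → ℝ) :
    CollusionProof (fun _ => ({L, H} : Set ℝ)) A
      (fun θ i => L * A θ i + f i) := by
  intro θ hθ C θhat hθhat hfix
  simp only [utility]
  have key : ∑ i ∈ C, A θhat i * (L - θ i) ≤ ∑ i ∈ C, A θ i * (L - θ i) := by
    by_cases hH : θ = fun _ => H
    · subst hH
      have hm := hmin C θhat hθhat (fun k hk => hfix k hk)
      calc ∑ i ∈ C, A θhat i * (L - H) = (∑ i ∈ C, A θhat i) * (L - H) := by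
              rw [Finset.sum_mul]
        _ ≤ (∑ i ∈ C, A (fun _ => H) i) * (L - H) :=
              mul_le_mul_of_nonpos_right hm (by linarith)
        _ = ∑ i ∈ C, A (fun _ => H) i * (L - H) := by rw [Finset.sum_mul]
    · apply Finset.sum_le_sum
      intro i _
      have hmem : θ i = L ∨ θ i = H := hθ i
      rcases hmem with hL | hHi
      · rw [hL]; simp
      · have hzero : A θ i = 0 := by
          rcases lt_or_eq_of_le (hnonneg θ hθ i) with hpos | heq
          · rcases hpareto θ hθ i hpos with h1 | h2
            · exfalso; rw [hHi] at h1; linarith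
            · exact absurd h2 hH
          · exact heq.symm
        rw [hzero, hHi]
        have := hnonneg θhat hθhat i
        nlinarith
  have e : ∀ g : (Fin n → ℝ) → Fin n → ℝ,
      ∑ i ∈ C, (L * g θhat i + f i - g θhat i * θ i) =
        ∑ i ∈ C, f i + ∑ i ∈ C, g θhat i * (L - θ i) := by
    intro g; rw [← Finset.sum_add_distrib]
    exact Finset.sum_congr rfl fun i _ => by ring
  have e2 : ∑ i ∈ C, (L * A θ i + f i - A θ i * θ i) =
      ∑ i ∈ C, f i + ∑ i ∈ C, A θ i * (L - θ i) := by
    rw [← Finset.sum_add_distrib]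
    exact Finset.sum_congr rfl fun i _ => by ring
  rw [ge_iff_le, e A, e2]
  linarith [key]
end
end

section
/- Fix reals L < H and n ≥ 2 agents, and let U : {L,H}^n → ℝ^n be the uniform rule: U_i(θ) = 1/n if θ = (H,…,H); otherwise U_i(θ) = 1/n_L if θ_i = L and U_i(θ) = 0 if θ_i = H, where n_L is the number of agents k with θ_k = L. Then for every f ∈ ℝ^n, the 1-linear mechanism (U,p) with p_i(θ) = L·U_i(θ) + f_i is collusion-proof. -/
open Function Finset

noncomputable section

open scoped Classical in
theorem stmt_18 {n : ℕ} (hn : 2 ≤ n) (L H : ℝ) (hLH : L < H)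
    (U : (Fin n → ℝ) → Fin n → ℝ)
    (hU : ∀ θ, InDomain (fun _ => ({L, H} : Set ℝ)) θ → ∀ i, U θ i =
      if θ = (fun _ => H) then 1 / (n : ℝ)
      else if θ i = L then
        1 / ((Finset.univ.filter (fun k : Fin n => θ k = L)).card : ℝ)
      else 0)
    (f : Fin n → ℝ) :
    CollusionProof (fun _ => ({L, H} : Set ℝ)) U
      (fun θ i => L * U θ i + f i) := by
  intro θ hθ C θhat hθhat hfix
  have hne : L ≠ H := hLH.ne
  have hdom : ∀ (σ : Fin n → ℝ), InDomain (fun _ => ({L, H} : Set ℝ)) σ →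
      ∀ i, σ i = L ∨ σ i = H := by
    intro σ hσ i
    have := hσ i
    simpa using this
  have hnonneg : ∀ (σ : Fin n → ℝ), InDomain (fun _ => ({L, H} : Set ℝ)) σ →
      ∀ i, 0 ≤ U σ i := by
    intro σ hσ i
    rw [hU σ hσ i]
    split_ifs
    · positivity
    · positivity
    · exact le_refl 0
  have hutil : ∀ (σ : Fin n → ℝ) i,
      utility U (fun σ i => L * U σ i + f i) σ i (θ i) = f i + (L - θ i) * U σ i := by
    intro σ i; simp [utility]; ring
  simp only [hutil]
  rw [Finset.sum_add_distrib, Finset.sum_add_distrib]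
  have key : ∀ g : Fin n → ℝ, ∑ i ∈ C, (L - θ i) * g i
      = (L - H) * ∑ i ∈ C.filter (fun i => θ i = H), g i := by
    intro g
    rw [Finset.mul_sum, ← Finset.sum_filter_add_sum_filter_not C (fun i => θ i = H)]
    have h1 : ∑ i ∈ C.filter (fun i => θ i = H), (L - θ i) * g i
        = ∑ i ∈ C.filter (fun i => θ i = H), (L - H) * g i := by
      apply Finset.sum_congr rfl; intro i hi
      rw [(Finset.mem_filter.mp hi).2]
    have h2 : ∑ i ∈ C.filter (fun i => ¬ θ i = H), (L - θ i) * g i = 0 := by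
      apply Finset.sum_eq_zero; intro i hi
      have hH := (Finset.mem_filter.mp hi).2
      have hL : θ i = L := (hdom θ hθ i).resolve_right hH
      rw [hL]; ring
    rw [h1, h2, add_zero]
  rw [key, key]
  set D := C.filter (fun i => θ i = H) with hD
  have main : ∑ i ∈ D, U θ i ≤ ∑ i ∈ D, U θhat i := by
    by_cases hall : θ = fun _ => H
    · -- θ = all H, so D = C
      have hDC : D = C := by
        rw [hD]
        apply Finset.filter_true_of_mem
        intro i _; rw [hall]
      rw [hDC]
      have hlhs : ∑ i ∈ C, U θ i = (C.card : ℝ) * (1 / (n : ℝ)) := by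
        rw [Finset.sum_congr rfl (fun i _ => by rw [hU θ hθ i, if_pos hall]),
          Finset.sum_const, nsmul_eq_mul]
      rw [hlhs]
      have hn0 : (0:ℝ) < (n : ℝ) := by positivity
      by_cases hall2 : θhat = fun _ => H
      · have : ∑ i ∈ C, U θhat i = (C.card : ℝ) * (1 / (n : ℝ)) := by
          rw [Finset.sum_congr rfl (fun i _ => by rw [hU θhat hθhat i, if_pos hall2]),
            Finset.sum_const, nsmul_eq_mul]
        rw [this]
      · -- θhat ≠ all H : the L-reporters are all in C and get total 1
        set S := Finset.univ.filter (fun k : Fin n => θhat k = L) with hS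
        have hSC : S ⊆ C := by
          intro k hk
          have hkL : θhat k = L := (Finset.mem_filter.mp hk).2
          by_contra hkC
          have := hfix k hkC
          rw [hall] at this
          exact hne (hkL ▸ this ▸ rfl)
        have hm1 : 1 ≤ S.card := by
          have : ∃ k, θhat k ≠ H := by
            by_contra h
            push_neg at h
            exact hall2 (funext h)
          obtain ⟨k, hk⟩ := this
          have hkL : θhat k = L := (hdom θhat hθhat k).resolve_right hk
          exact Finset.card_pos.mpr ⟨k, Finset.mem_filter.mpr ⟨Finset.mem_univ k, hkL⟩⟩
        have hm0 : (0:ℝ) < (S.card : ℝ) := by exact_mod_cast hm1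
        have hsum : ∑ i ∈ C, U θhat i = 1 := by
          have hsplit : ∑ i ∈ C, U θhat i = ∑ i ∈ C.filter (fun i => θhat i = L), U θhat i := by
            rw [eq_comm]
            apply Finset.sum_filter_of_ne
            intro i _ hUne
            by_contra hiL
            have hiH : θhat i = H := (hdom θhat hθhat i).resolve_left hiL
            rw [hU θhat hθhat i, if_neg hall2, if_neg hiL] at hUne
            exact hUne rfl
          have hCS : C.filter (fun i => θhat i = L) = S := by
            ext k
            simp only [Finset.mem_filter, hS, Finset.mem_univ, true_and]
            constructor
            · exact fun h => h.2
            · exact fun h => ⟨hSC (Finset.mem_filter.mpr ⟨Finset.mem_univ k, h⟩), h⟩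
          rw [hsplit, hCS]
          have : ∀ i ∈ S, U θhat i = 1 / (S.card : ℝ) := by
            intro i hi
            have hiL : θhat i = L := (Finset.mem_filter.mp hi).2
            rw [hU θhat hθhat i, if_neg hall2, if_pos hiL, hS]
          rw [Finset.sum_congr rfl this, Finset.sum_const, nsmul_eq_mul]
          field_simp
        rw [hsum]
        have hcard : (C.card : ℝ) ≤ (n : ℝ) := by
          have := Finset.card_le_univ C
          simp only [Finset.card_univ, Fintype.card_fin] at this
          exact_mod_cast this
        rw [mul_one_div, div_le_one hn0]
        exact hcard
    · -- θ ≠ all H: LHS sum is 0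
      have hzero : ∑ i ∈ D, U θ i = 0 := by
        apply Finset.sum_eq_zero
        intro i hi
        have hiH : θ i = H := (Finset.mem_filter.mp hi).2
        have hiL : ¬ θ i = L := by rw [hiH]; exact fun h => hne h.symm
        rw [hU θ hθ i, if_neg hall, if_neg hiL]
      rw [hzero]
      exact Finset.sum_nonneg (fun i _ => hnonneg θhat hθhat i)
  have := mul_le_mul_of_nonpos_left main (by linarith : L - H ≤ 0)
  linarith
end
end

section
/- Fix reals L < H and n = 3 agents, and define the allocation rule à : {L,H}³ → ℝ³ by Ã(θ) = (2/3, 1/6, 1/6) if θ = (L,L,L) or θ = (H,H,H), and Ã(θ) = U(θ) otherwise, where U is the uniform rule. Then: (a) for every f ∈ ℝ³, the 1-linear mechanism (Ã,p) with p_i(θ) = L·Ã_i(θ) + f_i is collusion-proof; and (b) for every f ∈ ℝ³, the (1/2)-linear mechanism (Ã,p') with p'_i(θ) = ((L+H)/2)·Ã_i(θ) + f_i is not bribeproof. -/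
open Function Finset

noncomputable section

open scoped Classical in
theorem stmt_19 (L H : ℝ) (hLH : L < H)
    (U Atilde : (Fin 3 → ℝ) → Fin 3 → ℝ)
    (hU : ∀ θ, InDomain (fun _ => ({L, H} : Set ℝ)) θ → ∀ i, U θ i =
      if θ = (fun _ => H) then 1 / 3
      else if θ i = L then
        1 / ((Finset.univ.filter (fun k : Fin 3 => θ k = L)).card : ℝ)
      else 0)
    (hAt : ∀ θ, InDomain (fun _ => ({L, H} : Set ℝ)) θ →
      Atilde θ =
        if θ = (fun _ => L) ∨ θ = (fun _ => H)
        then (![2 / 3, 1 / 6, 1 / 6] : Fin 3 → ℝ)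
        else U θ) :
    (∀ f : Fin 3 → ℝ, CollusionProof (fun _ => ({L, H} : Set ℝ)) Atilde
        (fun θ i => L * Atilde θ i + f i)) ∧
    (∀ f : Fin 3 → ℝ, ¬ Bribeproof (fun _ => ({L, H} : Set ℝ)) Atilde
        (fun θ i => ((L + H) / 2) * Atilde θ i + f i)) := by
  classical
  have hmem : ∀ σ : Fin 3 → ℝ, InDomain (fun _ => ({L, H} : Set ℝ)) σ →
      ∀ k, σ k = L ∨ σ k = H := by
    intro σ hσ k
    have := hσ k
    simpa using this
  have hdomH : InDomain (fun _ : Fin 3 => ({L, H} : Set ℝ)) (fun _ : Fin 3 => H) := by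
    intro k; simp
  have hAnn : ∀ σ, InDomain (fun _ => ({L, H} : Set ℝ)) σ → ∀ k, 0 ≤ Atilde σ k := by
    intro σ hσ k
    rw [hAt σ hσ]
    split_ifs with h
    · fin_cases k <;> norm_num
    · rw [hU σ hσ k]
      split_ifs <;> positivity
  have hAH : ∀ k, Atilde (fun _ => H) k = ![2 / 3, 1 / 6, 1 / 6] k := by
    intro k
    rw [hAt _ hdomH, if_pos (Or.inr rfl)]
  constructor
  · -- collusion-proofness of the 1-linear mechanism
    intro f θ hθ C θhat hθhat hfix
    rw [ge_iff_le, ← sub_nonneg, ← Finset.sum_sub_distrib]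
    have hterm : ∀ i, utility Atilde (fun θ i => L * Atilde θ i + f i) θ i (θ i)
        - utility Atilde (fun θ i => L * Atilde θ i + f i) θhat i (θ i)
        = (L - θ i) * (Atilde θ i - Atilde θhat i) := by
      intro i; simp only [utility]; ring
    by_cases hH : θ = fun _ => H
    · subst hH
      by_cases hhatH : θhat = fun _ => H
      · subst hhatH
        apply le_of_eq
        symm
        apply Finset.sum_eq_zero
        intro i _
        rw [hterm, sub_self, mul_zero]
      by_cases hhatL : θhat = fun _ => L
      · apply le_of_eq
        symm
        apply Finset.sum_eq_zero
        intro i _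
        rw [hterm]
        have : Atilde θhat = Atilde (fun _ => H) := by
          rw [hAt θhat hθhat, hAt _ hdomH, if_pos (Or.inl hhatL), if_pos (Or.inr rfl)]
        rw [this, sub_self, mul_zero]
      · -- θhat is a mixed profile
        have hUhat : Atilde θhat = U θhat := by
          rw [hAt θhat hθhat, if_neg]
          rintro (h | h)
          exacts [hhatL h, hhatH h]
        -- there is some k with θhat k = L
        have hex : ∃ k, θhat k = L := by
          by_contra hc
          push_neg at hc
          apply hhatH
          funext k
          rcases hmem θhat hθhat k with h | h
          · exact absurd h (hc k)
          · exact h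
        set m : ℕ := (Finset.univ.filter (fun k : Fin 3 => θhat k = L)).card with hm
        have hmpos : 0 < m := by
          obtain ⟨k, hk⟩ := hex
          apply Finset.card_pos.mpr
          exact ⟨k, by simp [hk]⟩
        have hval : ∀ i, Atilde θhat i = if θhat i = L then 1 / (m : ℝ) else 0 := by
          intro i
          rw [hUhat, hU θhat hθhat i, if_neg hhatH]
        have h2 : ∑ i ∈ C, Atilde θhat i = 1 := by
          have hCuniv : ∑ i ∈ C, Atilde θhat i = ∑ i ∈ Finset.univ, Atilde θhat i := by
            apply Finset.sum_subset (Finset.subset_univ C)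
            intro i _ hi
            rw [hval i, if_neg]
            rw [hfix i hi]
            exact hLH.ne'
          rw [hCuniv]
          have : ∑ i ∈ Finset.univ, Atilde θhat i
              = ∑ i ∈ Finset.univ.filter (fun k : Fin 3 => θhat k = L), (1 / (m : ℝ)) := by
            rw [Finset.sum_filter]
            exact Finset.sum_congr rfl fun i _ => hval i
          rw [this, Finset.sum_const, ← hm, nsmul_eq_mul]
          field_simp
        have h1 : ∑ i ∈ C, Atilde (fun _ => H) i ≤ 1 := by
          have hle : ∑ i ∈ C, Atilde (fun _ => H) i
              ≤ ∑ i ∈ Finset.univ, Atilde (fun _ => H) i :=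
            Finset.sum_le_sum_of_subset_of_nonneg (Finset.subset_univ C)
              (fun i _ _ => hAnn _ hdomH i)
          refine hle.trans_eq ?_
          rw [Fin.sum_univ_three, hAH 0, hAH 1, hAH 2]
          rw [show (![2 / 3, 1 / 6, 1 / 6] : Fin 3 → ℝ) 2 = 1 / 6 from rfl]
          norm_num
        have key : ∑ i ∈ C,
            (utility Atilde (fun θ i => L * Atilde θ i + f i) (fun _ => H) i ((fun _ => H) i)
            - utility Atilde (fun θ i => L * Atilde θ i + f i) θhat i ((fun _ => H) i))
            = (H - L) * ((∑ i ∈ C, Atilde θhat i) - ∑ i ∈ C, Atilde (fun _ => H) i) := by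
          rw [mul_sub, Finset.mul_sum, Finset.mul_sum, ← Finset.sum_sub_distrib]
          apply Finset.sum_congr rfl
          intro i _
          rw [hterm i]
          ring
        rw [key]
        have : 0 ≤ H - L := by linarith
        nlinarith [h1, h2]
    · -- θ is not the all-H profile: termwise nonnegativity
      apply Finset.sum_nonneg
      intro i _
      rw [hterm]
      rcases hmem θ hθ i with hiL | hiH
      · rw [hiL, sub_self, zero_mul]
      · have hz : Atilde θ i = 0 := by
          rw [hAt θ hθ, if_neg, hU θ hθ i, if_neg hH, if_neg]
          · rw [hiH]; exact hLH.ne'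
          · rintro (h | h)
            · have : θ i = L := by rw [h]
              rw [this] at hiH; exact hLH.ne hiH
            · exact hH h
        rw [hz, hiH]
        have := hAnn θhat hθhat i
        nlinarith
  · -- the (1/2)-linear mechanism is not bribeproof
    intro f hB
    set θ : Fin 3 → ℝ := fun _ => L with hθdef
    have hθdom : InDomain (fun _ => ({L, H} : Set ℝ)) θ := by intro k; simp [hθdef]
    have hHdom : H ∈ ({L, H} : Set ℝ) := by simp
    have hineq := hB θ hθdom 1 2 H hHdom
    set θhat : Fin 3 → ℝ := Function.update θ 1 H with hhatdef
    have hv0 : θhat 0 = L := by simp [hhatdef, hθdef, Function.update]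
    have hv1 : θhat 1 = H := by simp [hhatdef, hθdef, Function.update]
    have hv2 : θhat 2 = L := by simp [hhatdef, hθdef, Function.update]
    have hhatdom : InDomain (fun _ => ({L, H} : Set ℝ)) θhat := by
      intro k
      fin_cases k <;> simp [hhatdef, hθdef, Function.update]
    have hAθ : Atilde θ = ![2 / 3, 1 / 6, 1 / 6] := by
      rw [hAt θ hθdom, if_pos (Or.inl rfl)]
    have hhatnL : θhat ≠ fun _ => L := by
      intro h
      have : θhat 1 = L := by rw [h]
      rw [hv1] at this
      exact hLH.ne this.symm
    have hhatnH : θhat ≠ fun _ => H := by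
      intro h
      have : θhat 0 = H := by rw [h]
      rw [hv0] at this
      exact hLH.ne this
    have hUhat : Atilde θhat = U θhat := by
      rw [hAt θhat hhatdom, if_neg]
      rintro (h | h)
      exacts [hhatnL h, hhatnH h]
    have hfilter : (Finset.univ.filter (fun k : Fin 3 => θhat k = L)) = {0, 2} := by
      ext k
      fin_cases k <;>
        simp [hv0, hv1, hv2, hLH.ne']
    have hA1 : Atilde θhat 1 = 0 := by
      rw [hUhat, hU θhat hhatdom 1, if_neg hhatnH, if_neg]
      rw [hv1]; exact hLH.ne'
    have hA2 : Atilde θhat 2 = 1 / 2 := by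
      rw [hUhat, hU θhat hhatdom 2, if_neg hhatnH, if_pos hv2, hfilter]
      have hc : ({0, 2} : Finset (Fin 3)).card = 2 := by decide
      rw [hc]
      norm_num
    have e1 : Atilde θ 1 = 1 / 6 := by rw [hAθ]; norm_num
    have e2 : Atilde θ 2 = 1 / 6 := by rw [hAθ]; rfl
    have hθ1 : θ 1 = L := rfl
    have hθ2 : θ 2 = L := rfl
    rw [ge_iff_le] at hineq
    simp only [utility, ← hhatdef, hθ1, hθ2, e1, e2, hA1, hA2] at hineq
    nlinarith [hineq, hLH]
end
end
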